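/- arXiv:2503.01889 — 2 statements merged into one kernel-verified Lean document; each statement's English description precedes it below -/
import Mathlib

section
/- No Fictional Faith (total degeneracy part): let (σ*;π*) be an extended equilibrium of a finite game with uncertainty and suppose player i's equilibrium prior is pure, i.e. π*_i(θ) = 1 if θ = η and 0 otherwise, for some η ∈ Θ. Then for every probability distribution π'_i on Θ, the complete strategy profile obtained from (σ*;π*) by replacing π*_i with π'_i (leaving all strategies and all other players' priors unchanged) is again an extended equilibrium; in particular a continuum of extended equilibria exists in this case. -/
/-! A pure prior on `η` turns player `i`'s utility condition into "`σᵢ` is a best response at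
`η`", so the regret at `η` vanishes and with it the expected regret `ERᵢ(σ;π)`. The regret
condition then forces zero regret at every parameter: `σᵢ` is a best response whatever the
parameter. Such a strategy meets both equilibrium conditions under any prior, since
`EUᵢ(σ;π) + ERᵢ(σ;π) = Σ_θ (max_c EUᵢ(c;θ|σ)) πᵢ(θ)` dominates every `EUᵢ(aᵢ|σ;π)`. -/

open Finset

noncomputable section

/-- A probability distribution on a finite type. -/
def IsDist {α : Type*} [Fintype α] (p : α → ℝ) : Prop :=
  (∀ x, 0 ≤ p x) ∧ ∑ x, p x = 1

variable {N : ℕ} {A : Fin N → Type*} [∀ j, Fintype (A j)] [∀ j, Nonempty (A j)]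
  {Θ : Type*} [Fintype Θ] [Nonempty Θ]

/-- `Π(a|σ) = ∏ⱼ σⱼ(aⱼ)`. -/
def piProb (σ : ∀ j : Fin N, A j → ℝ) (a : ∀ j : Fin N, A j) : ℝ := ∏ j, σ j (a j)

/-- Effective utility matrix `EUᵢ(aᵢ;θ|σ)`. -/
def EUmat (U : ∀ i : Fin N, (∀ j : Fin N, A j) → Θ → ℝ) (σ : ∀ j : Fin N, A j → ℝ)
    (i : Fin N) (ai : A i) (θ : Θ) : ℝ :=
  ∑ b : ∀ j : Fin N, A j, U i (Function.update b i ai) θ * piProb σ b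

/-- Effective regret matrix `ERᵢ(aᵢ;θ|σ)`. -/
def ERmat (U : ∀ i : Fin N, (∀ j : Fin N, A j) → Θ → ℝ) (σ : ∀ j : Fin N, A j → ℝ)
    (i : Fin N) (ai : A i) (θ : Θ) : ℝ :=
  (Finset.univ.sup' Finset.univ_nonempty fun ci : A i => EUmat U σ i ci θ) - EUmat U σ i ai θ

/-- Expected utility of action `aᵢ`: `EUᵢ(aᵢ|σ;π)`. -/
def EUact (U : ∀ i : Fin N, (∀ j : Fin N, A j) → Θ → ℝ) (σ : ∀ j : Fin N, A j → ℝ) (π : Fin N → Θ → ℝ)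
    (i : Fin N) (ai : A i) : ℝ :=
  ∑ θ, EUmat U σ i ai θ * π i θ

/-- Expected utility `EUᵢ(σ;π)`. -/
def EUtot (U : ∀ i : Fin N, (∀ j : Fin N, A j) → Θ → ℝ) (σ : ∀ j : Fin N, A j → ℝ) (π : Fin N → Θ → ℝ)
    (i : Fin N) : ℝ :=
  ∑ ai, EUact U σ π i ai * σ i ai

/-- Expected regret at parameter `θ`: `ERᵢ(θ|σ;π)`. -/
def ERparam (U : ∀ i : Fin N, (∀ j : Fin N, A j) → Θ → ℝ) (σ : ∀ j : Fin N, A j → ℝ)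
    (i : Fin N) (θ : Θ) : ℝ :=
  ∑ ai, ERmat U σ i ai θ * σ i ai

/-- Expected regret `ERᵢ(σ;π)`. -/
def ERtot (U : ∀ i : Fin N, (∀ j : Fin N, A j) → Θ → ℝ) (σ : ∀ j : Fin N, A j → ℝ) (π : Fin N → Θ → ℝ)
    (i : Fin N) : ℝ :=
  ∑ θ, ERparam U σ i θ * π i θ

/-- Extended equilibrium conditions. -/
def ExtendedEquilibrium (U : ∀ i : Fin N, (∀ j : Fin N, A j) → Θ → ℝ)
    (σ : ∀ j : Fin N, A j → ℝ) (π : Fin N → Θ → ℝ) : Prop :=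
  (∀ i, ∀ ai : A i, EUtot U σ π i ≥ EUact U σ π i ai) ∧
  (∀ i, ∀ θ : Θ, ERtot U σ π i ≥ ERparam U σ i θ)

/-- φ_{i,aᵢ}(σ;π). -/
def phi (U : ∀ i : Fin N, (∀ j : Fin N, A j) → Θ → ℝ) (σ : ∀ j : Fin N, A j → ℝ) (π : Fin N → Θ → ℝ)
    (i : Fin N) (ai : A i) : ℝ :=
  max 0 (EUact U σ π i ai - EUtot U σ π i)

/-- ψ_{i,θ}(σ;π). -/
def psi (U : ∀ i : Fin N, (∀ j : Fin N, A j) → Θ → ℝ) (σ : ∀ j : Fin N, A j → ℝ) (π : Fin N → Θ → ℝ)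
    (i : Fin N) (θ : Θ) : ℝ :=
  max 0 (ERparam U σ i θ - ERtot U σ π i)

/-- Real-strategy part of the auxiliary map `Υ`. -/
def nextStrat (U : ∀ i : Fin N, (∀ j : Fin N, A j) → Θ → ℝ) (σ : ∀ j : Fin N, A j → ℝ) (π : Fin N → Θ → ℝ)
    (i : Fin N) (ai : A i) : ℝ :=
  (σ i ai + phi U σ π i ai) / (1 + ∑ bi, phi U σ π i bi)

/-- Prior part of the auxiliary map `Υ`. -/
def nextPrior (U : ∀ i : Fin N, (∀ j : Fin N, A j) → Θ → ℝ) (σ : ∀ j : Fin N, A j → ℝ) (π : Fin N → Θ → ℝ)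
    (i : Fin N) (θ : Θ) : ℝ :=
  (π i θ + psi U σ π i θ) / (1 + ∑ χ, psi U σ π i χ)

/-- The auxiliary map `Υ`. -/
def Upsilon (U : ∀ i : Fin N, (∀ j : Fin N, A j) → Θ → ℝ)
    (ρ : (∀ i, A i → ℝ) × (Fin N → Θ → ℝ)) : (∀ i, A i → ℝ) × (Fin N → Θ → ℝ) :=
  (fun i => nextStrat U ρ.1 ρ.2 i, fun i => nextPrior U ρ.1 ρ.2 i)

section

omit [Nonempty Θ]

variable {U : ∀ i : Fin N, (∀ j : Fin N, A j) → Θ → ℝ} {σ : ∀ j : Fin N, A j → ℝ}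
  {π : Fin N → Θ → ℝ} {i : Fin N}

def bestEU (U : ∀ i : Fin N, (∀ j : Fin N, A j) → Θ → ℝ) (σ : ∀ j : Fin N, A j → ℝ)
    (i : Fin N) (θ : Θ) : ℝ :=
  Finset.univ.sup' Finset.univ_nonempty fun ci : A i => EUmat U σ i ci θ

omit [Fintype Θ] in
theorem ERmat_eq_bestEU_sub (ai : A i) (θ : Θ) :
    ERmat U σ i ai θ = bestEU U σ i θ - EUmat U σ i ai θ :=
  rfl

omit [Fintype Θ] in
theorem EUmat_le_bestEU (ai : A i) (θ : Θ) : EUmat U σ i ai θ ≤ bestEU U σ i θ :=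
  Finset.le_sup' (fun ci : A i => EUmat U σ i ci θ) (Finset.mem_univ ai)

omit [Fintype Θ] in
theorem ERparam_nonneg (hσ : ∀ ai, 0 ≤ σ i ai) (θ : Θ) : 0 ≤ ERparam U σ i θ :=
  Finset.sum_nonneg fun ai _ =>
    mul_nonneg (sub_nonneg.2 (EUmat_le_bestEU ai θ)) (hσ ai)

theorem EUtot_add_ERtot (hσ : ∑ ai, σ i ai = 1) :
    EUtot U σ π i + ERtot U σ π i = ∑ θ, bestEU U σ i θ * π i θ := by
  have hER : ∀ θ, ERparam U σ i θ = bestEU U σ i θ - ∑ ai, EUmat U σ i ai θ * σ i ai := by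
    intro θ
    simp only [ERparam, ERmat_eq_bestEU_sub, sub_mul, Finset.sum_sub_distrib, ← Finset.mul_sum,
      hσ, mul_one]
  have hEU : EUtot U σ π i = ∑ θ, (∑ ai, EUmat U σ i ai θ * σ i ai) * π i θ := by
    simp only [EUtot, EUact, Finset.sum_mul]
    rw [Finset.sum_comm]
    refine Finset.sum_congr rfl fun θ _ => Finset.sum_congr rfl fun ai _ => ?_
    ring
  rw [hEU, ERtot, ← Finset.sum_add_distrib]
  simp only [hER, ← add_mul, add_sub_cancel]

theorem EUact_le_sum_bestEU (hπ : ∀ θ, 0 ≤ π i θ) (ai : A i) :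
    EUact U σ π i ai ≤ ∑ θ, bestEU U σ i θ * π i θ :=
  Finset.sum_le_sum fun θ _ => mul_le_mul_of_nonneg_right (EUmat_le_bestEU ai θ) (hπ θ)

theorem EUact_le_EUtot_of_ERtot_eq_zero (hσ : ∑ ai, σ i ai = 1) (hπ : ∀ θ, 0 ≤ π i θ)
    (hER : ERtot U σ π i = 0) (ai : A i) : EUact U σ π i ai ≤ EUtot U σ π i := by
  have := EUtot_add_ERtot (U := U) (π := π) hσ
  linarith [EUact_le_sum_bestEU (U := U) (σ := σ) hπ ai]

theorem ERtot_eq_zero_of_ERparam_eq_zero (h : ∀ θ, ERparam U σ i θ = 0) :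
    ERtot U σ π i = 0 := by
  simp [ERtot, h]

section Pure

variable [DecidableEq Θ] {η : Θ}

omit [∀ j, Nonempty (A j)] in
theorem EUact_of_pure (hpure : π i = fun θ => if θ = η then (1 : ℝ) else 0) (ai : A i) :
    EUact U σ π i ai = EUmat U σ i ai η := by
  simp [EUact, hpure]

theorem ERtot_nonpos_of_pure (hσ : ∑ ai, σ i ai = 1)
    (hpure : π i = fun θ => if θ = η then (1 : ℝ) else 0)
    (hEU : ∀ ai, EUtot U σ π i ≥ EUact U σ π i ai) : ERtot U σ π i ≤ 0 := by
  have hsum := EUtot_add_ERtot (U := U) (π := π) hσ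
  simp only [hpure, mul_ite, mul_one, mul_zero, Finset.sum_ite_eq', Finset.mem_univ,
    if_true] at hsum
  have hbest : bestEU U σ i η ≤ EUtot U σ π i :=
    Finset.sup'_le _ _ fun ci _ => (EUact_of_pure hpure ci).symm.trans_le (hEU ci)
  linarith

end Pure

theorem ExtendedEquilibrium.update_prior (heq : ExtendedEquilibrium U σ π) (π' : Θ → ℝ)
    (hEU : ∀ ai, EUtot U σ (Function.update π i π') i ≥ EUact U σ (Function.update π i π') i ai)
    (hER : ∀ θ, ERtot U σ (Function.update π i π') i ≥ ERparam U σ i θ) :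
    ExtendedEquilibrium U σ (Function.update π i π') := by
  constructor
  · intro j aj
    rcases eq_or_ne j i with rfl | hj
    · exact hEU aj
    · simpa only [EUtot, EUact, Function.update_of_ne hj] using heq.1 j aj
  · intro j θ
    rcases eq_or_ne j i with rfl | hj
    · exact hER θ
    · simpa only [ERtot, Function.update_of_ne hj] using heq.2 j θ

end

/-- "No Fictional Faith", total degeneracy part: if player `i`'s equilibrium
prior is pure, then replacing it by an arbitrary prior again yields an extended
equilibrium. -/
theorem no_fictional_faith_degenerate [DecidableEq Θ]
    (U : ∀ i : Fin N, (∀ j : Fin N, A j) → Θ → ℝ)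
    (σ : ∀ j : Fin N, A j → ℝ) (π : Fin N → Θ → ℝ)
    (hσ : ∀ i, IsDist (σ i)) (hπ : ∀ i, IsDist (π i))
    (heq : ExtendedEquilibrium U σ π) (i : Fin N) (η : Θ)
    (hpure : π i = fun θ => if θ = η then (1 : ℝ) else 0)
    (π' : Θ → ℝ) (hπ' : IsDist π') :
    (∀ j, IsDist (Function.update π i π' j)) ∧
    ExtendedEquilibrium U σ (Function.update π i π') := by
  obtain ⟨hσ_nonneg, hσ_sum⟩ := hσ i
  have hregret_free : ∀ θ, ERparam U σ i θ = 0 := fun θ =>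
    le_antisymm ((heq.2 i θ).trans (ERtot_nonpos_of_pure hσ_sum hpure (heq.1 i)))
      (ERparam_nonneg hσ_nonneg θ)
  have hER : ERtot U σ (Function.update π i π') i = 0 :=
    ERtot_eq_zero_of_ERparam_eq_zero hregret_free
  refine ⟨(Function.forall_update_iff π fun _ p => IsDist p).2 ⟨hπ', fun j _ => hπ j⟩,
    heq.update_prior π' (EUact_le_EUtot_of_ERtot_eq_zero hσ_sum ?_ hER) ?_⟩
  · simpa using hπ'.1
  · exact fun θ => ((hregret_free θ).trans hER.symm).le
end
end

section
/- Uniqueness of the extended equilibrium of the 'Generals and the weather' game: the 2-player game with uncertainty with action sets 𝒜_1 = 𝒜_2 = {Up, Down}, parameter set Θ = {Calm, Storm}, and utilities U_1(·,·;Calm) = [[1,0],[0,1]], U_1(·,·;Storm) = [[1,0],[1,1]], U_2(·,·;Calm) = [[0,1],[1,0]], U_2(·,·;Storm) = [[0,1],[0,0]] has exactly one extended equilibrium, namely σ*_1 = (1−1/√2, 1/√2), σ*_2 = (2−√2, √2−1), π*_1 = (1/√2, 1−1/√2), π*_2 = (√2−1, 2−√2). -/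
/-!
In an extended equilibrium every action in the support of `σᵢ` maximises expected utility and
every weather state in the support of `πᵢ` maximises expected regret. Checking the boundary
cases shows that all four distributions have full support, so each general is indifferent
between Up and Down and between Calm and Storm. For the probabilities `p`, `q` of Up these four
indifference equations force `q = 2 p` and `2 p² - 4 p + 1 = 0`, whose root in `[0, 1/2]` is
`p = 1 - 1/√2`; the priors then follow.
-/

open Finset

noncomputable section

variable {N : ℕ} {A : Fin N → Type*} [∀ j, Fintype (A j)] [∀ j, Nonempty (A j)]
  {Θ : Type*} [Fintype Θ] [Nonempty Θ]

/-- The utilities of the "Generals and the weather" game. -/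
def GWU : ∀ _ : Fin 2, (∀ _ : Fin 2, Fin 2) → Fin 2 → ℝ := fun i a θ =>
  if i = 0 then
    (if θ = 0 then !![(1:ℝ), 0; 0, 1] else !![(1:ℝ), 0; 1, 1]) (a 0) (a 1)
  else
    (if θ = 0 then !![(0:ℝ), 1; 1, 0] else !![(0:ℝ), 1; 0, 0]) (a 0) (a 1)

/-- The equilibrium mixed strategies `σ*` of the "Generals and the weather" game. -/
def GWσ : ∀ _ : Fin 2, Fin 2 → ℝ :=
  ![![1 - 1 / Real.sqrt 2, 1 / Real.sqrt 2], ![2 - Real.sqrt 2, Real.sqrt 2 - 1]]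

/-- The equilibrium subjective priors `π*` of the "Generals and the weather" game. -/
def GWπ : Fin 2 → Fin 2 → ℝ :=
  ![![1 / Real.sqrt 2, 1 - 1 / Real.sqrt 2], ![Real.sqrt 2 - 1, 2 - Real.sqrt 2]]

theorem IsDist.forall_le_sum_mul_iff {α : Type*} [Fintype α] [Nonempty α] {w : α → ℝ}
    (hw : IsDist w) (f : α → ℝ) :
    (∀ x, f x ≤ ∑ y, f y * w y) ↔ ∀ x, 0 < w x → ∀ y, f y ≤ f x := by
  constructor
  · intro h x hx y
    obtain ⟨z, -, hz⟩ := exists_mem_eq_sup' univ_nonempty f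
    have hmax : ∀ y, f y ≤ f z := fun y => hz ▸ le_sup' f (mem_univ y)
    have hgap : ∀ y ∈ univ, 0 ≤ (f z - f y) * w y := fun y _ =>
      mul_nonneg (sub_nonneg.2 (hmax y)) (hw.1 y)
    have hsum : ∑ y, (f z - f y) * w y = 0 := by
      refine le_antisymm ?_ (sum_nonneg hgap)
      simp only [sub_mul, sum_sub_distrib, ← mul_sum, hw.2, mul_one]
      linarith [h z]
    have hx0 : (f z - f x) * w x = 0 := (sum_eq_zero_iff_of_nonneg hgap).1 hsum x (mem_univ x)
    have hfx : f z = f x := sub_eq_zero.1 ((mul_eq_zero.1 hx0).resolve_right hx.ne')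
    exact hfx ▸ hmax y
  · intro h x
    calc f x = ∑ y, f x * w y := by rw [← mul_sum, hw.2, mul_one]
      _ ≤ ∑ y, f y * w y := sum_le_sum fun y _ => by
        rcases (hw.1 y).eq_or_lt with hy | hy
        · simp [← hy]
        · exact mul_le_mul_of_nonneg_right (h y hy x) hy.le

theorem extendedEquilibrium_iff {U : ∀ i : Fin N, (∀ j : Fin N, A j) → Θ → ℝ}
    {σ : ∀ j : Fin N, A j → ℝ} {π : Fin N → Θ → ℝ}
    (hσ : ∀ i, IsDist (σ i)) (hπ : ∀ i, IsDist (π i)) :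
    ExtendedEquilibrium U σ π ↔
      ∀ i, (∀ a, 0 < σ i a → ∀ b, EUact U σ π i b ≤ EUact U σ π i a) ∧
        (∀ θ, 0 < π i θ → ∀ χ, ERparam U σ i χ ≤ ERparam U σ i θ) := by
  simp only [ExtendedEquilibrium, EUtot, ERtot, ge_iff_le, (hσ _).forall_le_sum_mul_iff,
    (hπ _).forall_le_sum_mul_iff, forall_and]

theorem isDist_fin_two_iff {w : Fin 2 → ℝ} :
    IsDist w ↔ ∃ t ∈ Set.Icc 0 1, w = ![t, 1 - t] := by
  constructor
  · rintro ⟨hw, hw1⟩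
    rw [Fin.sum_univ_two] at hw1
    refine ⟨w 0, ⟨hw 0, by linarith [hw 1]⟩, ?_⟩
    ext i
    fin_cases i
    exacts [rfl, eq_sub_of_add_eq' hw1]
  · rintro ⟨t, ht, rfl⟩
    simpa [IsDist, Fin.forall_fin_two, Fin.sum_univ_two] using ht

theorem forall_isDist_fin_two_iff {σ : Fin 2 → Fin 2 → ℝ} :
    (∀ i, IsDist (σ i)) ↔
      ∃ p ∈ Set.Icc 0 1, ∃ q ∈ Set.Icc 0 1, σ = ![![p, 1 - p], ![q, 1 - q]] := by
  simp only [Fin.forall_fin_two, isDist_fin_two_iff]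
  constructor
  · rintro ⟨⟨p, hp, hσ₀⟩, q, hq, hσ₁⟩
    refine ⟨p, hp, q, hq, ?_⟩
    ext1 i
    fin_cases i
    exacts [hσ₀, hσ₁]
  · rintro ⟨p, hp, q, hq, rfl⟩
    exact ⟨⟨p, hp, rfl⟩, q, hq, rfl⟩

theorem sum_fin_two_pi (f : (Fin 2 → Fin 2) → ℝ) :
    ∑ b, f b = f ![0, 0] + f ![0, 1] + f ![1, 0] + f ![1, 1] := by
  rw [← (piFinTwoEquiv fun _ => Fin 2).symm.sum_comp, Fintype.sum_prod_type]
  simp [Fin.sum_univ_two, piFinTwoEquiv, add_assoc]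

theorem sup'_univ_fin_two {α : Type*} [LinearOrder α] (f : Fin 2 → α) :
    univ.sup' univ_nonempty f = max (f 0) (f 1) := by
  simp [Fin.univ_succ, sup'_insert]

section GeneralsAndWeather

variable (p q t s : ℝ)

theorem gw_EUmat_zero : EUmat GWU ![![p, 1 - p], ![q, 1 - q]] 0 = ![![q, q], ![1 - q, 1]] := by
  ext a θ
  fin_cases a <;> fin_cases θ <;>
    simp [EUmat, sum_fin_two_pi, piProb, GWU, Fin.prod_univ_two, ← add_mul, ← mul_add,
      add_assoc]

theorem gw_EUmat_one : EUmat GWU ![![p, 1 - p], ![q, 1 - q]] 1 = ![![1 - p, 0], ![p, p]] := by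
  ext a θ
  fin_cases a <;> fin_cases θ <;>
    simp [EUmat, sum_fin_two_pi, piProb, GWU, Fin.prod_univ_two, ← mul_add]

theorem gw_EUact_zero :
    EUact GWU ![![p, 1 - p], ![q, 1 - q]] ![![t, 1 - t], ![s, 1 - s]] 0 = ![q, 1 - t * q] := by
  ext a
  fin_cases a <;> simp only [EUact, gw_EUmat_zero, Fin.sum_univ_two, Fin.zero_eta, Fin.mk_one,
    Matrix.cons_val_zero, Matrix.cons_val_one, Matrix.cons_val_fin_one] <;> ring

theorem gw_EUact_one :
    EUact GWU ![![p, 1 - p], ![q, 1 - q]] ![![t, 1 - t], ![s, 1 - s]] 1 = ![s * (1 - p), p] := by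
  ext a
  fin_cases a <;> simp only [EUact, gw_EUmat_one, Fin.sum_univ_two, Fin.zero_eta, Fin.mk_one,
    Matrix.cons_val_zero, Matrix.cons_val_one, Matrix.cons_val_fin_one] <;> ring

variable {p q}

theorem gw_ERparam_zero (hq : q ≤ 1) : ERparam GWU ![![p, 1 - p], ![q, 1 - q]] 0 =
    ![(max q (1 - q) - q) * p + (max q (1 - q) - (1 - q)) * (1 - p), (1 - q) * p] := by
  ext θ
  fin_cases θ <;> simp [ERparam, ERmat, sup'_univ_fin_two, gw_EUmat_zero, Fin.sum_univ_two, hq]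

theorem gw_ERparam_one (hp : 0 ≤ p) : ERparam GWU ![![p, 1 - p], ![q, 1 - q]] 1 =
    ![(max (1 - p) p - (1 - p)) * q + (max (1 - p) p - p) * (1 - q), p * q] := by
  ext θ
  fin_cases θ <;> simp [ERparam, ERmat, sup'_univ_fin_two, gw_EUmat_one, Fin.sum_univ_two, hp]

end GeneralsAndWeather

/-- `p`, `q` are the probabilities of Up of the two generals and `t`, `s` their priors on Calm;
each field says that a pure action, resp. weather state, carrying positive weight maximises
expected utility, resp. expected regret. -/
structure GWSupportConditions (p q t s : ℝ) : Prop where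
  up₀ : 0 < p → 1 - t * q ≤ q
  down₀ : 0 < 1 - p → q ≤ 1 - t * q
  calm₀ : 0 < t → (1 - q) * p ≤ (max q (1 - q) - q) * p + (max q (1 - q) - (1 - q)) * (1 - p)
  storm₀ : 0 < 1 - t →
    (max q (1 - q) - q) * p + (max q (1 - q) - (1 - q)) * (1 - p) ≤ (1 - q) * p
  up₁ : 0 < q → p ≤ s * (1 - p)
  down₁ : 0 < 1 - q → s * (1 - p) ≤ p
  calm₁ : 0 < s → p * q ≤ (max (1 - p) p - (1 - p)) * q + (max (1 - p) p - p) * (1 - q)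
  storm₁ : 0 < 1 - s → (max (1 - p) p - (1 - p)) * q + (max (1 - p) p - p) * (1 - q) ≤ p * q

theorem gw_extendedEquilibrium_iff {p q t s : ℝ} (hp : p ∈ Set.Icc 0 1) (hq : q ∈ Set.Icc 0 1)
    (ht : t ∈ Set.Icc 0 1) (hs : s ∈ Set.Icc 0 1) :
    ExtendedEquilibrium GWU ![![p, 1 - p], ![q, 1 - q]] ![![t, 1 - t], ![s, 1 - s]] ↔
      GWSupportConditions p q t s := by
  rw [extendedEquilibrium_iff (forall_isDist_fin_two_iff.2 ⟨p, hp, q, hq, rfl⟩)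
    (forall_isDist_fin_two_iff.2 ⟨t, ht, s, hs, rfl⟩)]
  simp only [Fin.forall_fin_two, gw_EUact_zero, gw_EUact_one, gw_ERparam_zero hq.2,
    gw_ERparam_one hp.1, Matrix.cons_val_zero, Matrix.cons_val_one, Matrix.cons_val_fin_one,
    le_refl, and_true, true_and]
  exact ⟨fun ⟨⟨⟨a, b⟩, c, d⟩, ⟨e, f⟩, g, h⟩ => ⟨a, b, c, d, e, f, g, h⟩,
    fun ⟨a, b, c, d, e, f, g, h⟩ => ⟨⟨⟨a, b⟩, c, d⟩, ⟨e, f⟩, g, h⟩⟩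

namespace GWSupportConditions

variable {p q t s : ℝ}

theorem pos (h : GWSupportConditions p q t s) (hp : 0 ≤ p) (hq : q ≤ 1) : 0 < p := by
  refine hp.lt_of_ne fun hp0 => ?_
  subst hp0
  have hq1 : q = 1 := by
    by_contra hq1
    have hs : s ≤ 0 := by simpa using h.down₁ (sub_pos.2 (hq.lt_of_ne hq1))
    have := h.storm₁ (by linarith)
    norm_num at this
    exact hq1 (le_antisymm hq this)
  subst hq1
  have ht0 : t ≤ 0 := by simpa using h.down₀ (by norm_num)
  have := h.storm₀ (by linarith)
  norm_num at this

theorem lt_one (h : GWSupportConditions p q t s) (hp : p ≤ 1) (hq : 0 ≤ q) : p < 1 := by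
  refine hp.lt_of_ne fun hp1 => ?_
  subst hp1
  have hq0 : q = 0 := by
    by_contra hq0
    have := h.up₁ (hq.lt_of_ne' hq0)
    norm_num at this
  subst hq0
  have := h.up₀ one_pos
  norm_num at this

theorem indifference (h : GWSupportConditions p q t s) (hp : p ∈ Set.Icc 0 1)
    (hq : q ∈ Set.Icc 0 1) (ht : t ∈ Set.Icc 0 1) (hs : s ∈ Set.Icc 0 1) :
    p ≤ 1 / 2 ∧ 1 / 2 ≤ q ∧ q * (1 + t) = 1 ∧ s * (1 - p) = p ∧
      (2 * q - 1) * (1 - p) = (1 - q) * p ∧ (1 - 2 * p) * (1 - q) = p * q := by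
  have hp0 := h.pos hp.1 hq.2
  have hp1 := h.lt_one hp.2 hq.1
  have hqt : q * (1 + t) = 1 := by linarith [h.up₀ hp0, h.down₀ (by linarith)]
  have hq2 : 1 / 2 ≤ q := by nlinarith [ht.2, hq.1]
  have hM : max q (1 - q) = q := max_eq_left (by linarith)
  have ht0 : 0 < t := by
    refine ht.1.lt_of_ne fun ht0 => ?_
    have := h.storm₀ (by linarith)
    rw [hM] at this
    nlinarith
  have hq1 : q < 1 := by nlinarith
  have hsp : s * (1 - p) = p := le_antisymm (h.down₁ (by linarith)) (h.up₁ (by linarith))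
  have hp2 : p ≤ 1 / 2 := by nlinarith [hs.2]
  have hK : max (1 - p) p = 1 - p := max_eq_left (by linarith)
  have ht1 : t < 1 := by
    refine ht.2.lt_of_ne fun ht1 => ?_
    have := h.calm₀ (by linarith)
    rw [hM] at this
    nlinarith
  have hs0 : 0 < s := by nlinarith
  have hs1 : s < 1 := by
    refine hs.2.lt_of_ne fun hs1 => ?_
    have := h.calm₁ (by linarith)
    rw [hK] at this
    nlinarith
  refine ⟨hp2, hq2, hqt, hsp, ?_, ?_⟩
  · have h₁ := h.calm₀ ht0
    have h₂ := h.storm₀ (by linarith)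
    rw [hM] at h₁ h₂
    linarith
  · have h₁ := h.calm₁ hs0
    have h₂ := h.storm₁ (by linarith)
    rw [hK] at h₁ h₂
    linarith

theorem of_indifference (hp : p ≤ 1 / 2) (hq : 1 / 2 ≤ q) (hqt : q * (1 + t) = 1)
    (hsp : s * (1 - p) = p) (h₀ : (2 * q - 1) * (1 - p) = (1 - q) * p)
    (h₁ : (1 - 2 * p) * (1 - q) = p * q) : GWSupportConditions p q t s := by
  have hM : max q (1 - q) = q := max_eq_left (by linarith)
  have hK : max (1 - p) p = 1 - p := max_eq_left (by linarith)
  constructor <;> intro <;> (try simp only [hM, hK]) <;> linarith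

end GWSupportConditions

theorem gw_indifference_solution {p q t s : ℝ} (hp : p ≤ 1 / 2) (hqt : q * (1 + t) = 1)
    (hsp : s * (1 - p) = p) (h₀ : (2 * q - 1) * (1 - p) = (1 - q) * p)
    (h₁ : (1 - 2 * p) * (1 - q) = p * q) :
    p = 1 - 1 / √2 ∧ q = 2 - √2 ∧ t = 1 / √2 ∧ s = √2 - 1 := by
  have hr : √2 ^ 2 = 2 := Real.sq_sqrt zero_le_two
  have hr1 := Real.one_lt_sqrt_two
  rw [← Real.sqrt_div_self']
  have hq : q = 2 * p := by linear_combination h₀ + h₁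
  have hp' : p = 1 - √2 / 2 := by
    have hroots : (p - (1 - √2 / 2)) * (p - (1 + √2 / 2)) = 0 := by
      linear_combination (-1 / 2) * h₀ + ((2 - p) / 2) * hq - (1 / 4) * hr
    rcases mul_eq_zero.1 hroots with h | h <;> linarith
  subst hp'
  subst hq
  refine ⟨rfl, by ring, ?_, ?_⟩
  · have hq0 : (0 : ℝ) < 2 - √2 := by linarith [Real.sqrt_two_lt_three_halves]
    refine mul_left_cancel₀ hq0.ne' ?_
    linear_combination hqt + (1 / 2) * hr
  · refine mul_left_cancel₀ (by positivity : √2 / 2 ≠ 0) ?_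
    linear_combination hsp - (1 / 2) * hr

theorem gwSupportConditions_iff {p q t s : ℝ} (hp : p ∈ Set.Icc 0 1) (hq : q ∈ Set.Icc 0 1)
    (ht : t ∈ Set.Icc 0 1) (hs : s ∈ Set.Icc 0 1) :
    GWSupportConditions p q t s ↔
      p = 1 - 1 / √2 ∧ q = 2 - √2 ∧ t = 1 / √2 ∧ s = √2 - 1 := by
  constructor
  · intro h
    obtain ⟨hp2, -, hqt, hsp, h₀, h₁⟩ := h.indifference hp hq ht hs
    exact gw_indifference_solution hp2 hqt hsp h₀ h₁
  · rintro ⟨rfl, rfl, rfl, rfl⟩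
    have hr : √2 ^ 2 = 2 := Real.sq_sqrt zero_le_two
    rw [← Real.sqrt_div_self']
    exact .of_indifference (by linarith [Real.one_lt_sqrt_two])
      (by linarith [Real.sqrt_two_lt_three_halves]) (by linear_combination (-1 / 2) * hr)
      (by linear_combination (1 / 2) * hr) (by linear_combination (-1 / 2) * hr)
      (by linear_combination (1 / 2) * hr)

theorem gw_values_mem_Icc :
    1 - 1 / √2 ∈ Set.Icc (0 : ℝ) 1 ∧ 2 - √2 ∈ Set.Icc (0 : ℝ) 1 ∧
      1 / √2 ∈ Set.Icc (0 : ℝ) 1 ∧ √2 - 1 ∈ Set.Icc (0 : ℝ) 1 := by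
  rw [← Real.sqrt_div_self']
  have := Real.one_lt_sqrt_two
  have := Real.sqrt_two_lt_three_halves
  refine ⟨⟨?_, ?_⟩, ⟨?_, ?_⟩, ⟨?_, ?_⟩, ?_, ?_⟩ <;> linarith

theorem GWσ_eq : GWσ = ![![1 - 1 / √2, 1 - (1 - 1 / √2)], ![2 - √2, 1 - (2 - √2)]] := by
  rw [GWσ, sub_sub_cancel, show 1 - (2 - √2) = √2 - 1 by ring]

theorem GWπ_eq : GWπ = ![![1 / √2, 1 - 1 / √2], ![√2 - 1, 1 - (√2 - 1)]] := by
  rw [GWπ, show 1 - (√2 - 1) = 2 - √2 by ring]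

/-- the "Generals and the weather" game has exactly one extended
equilibrium, namely `(GWσ; GWπ)`. -/
theorem gw_extended_equilibrium_unique :
    ∀ (σ : ∀ _ : Fin 2, Fin 2 → ℝ) (π : Fin 2 → Fin 2 → ℝ),
      ((∀ i, IsDist (σ i)) ∧ (∀ i, IsDist (π i)) ∧ ExtendedEquilibrium GWU σ π) ↔
        (σ = GWσ ∧ π = GWπ) := by
  intro σ π
  constructor
  · rintro ⟨hσ, hπ, hE⟩
    obtain ⟨p, hp, q, hq, rfl⟩ := forall_isDist_fin_two_iff.1 hσ
    obtain ⟨t, ht, s, hs, rfl⟩ := forall_isDist_fin_two_iff.1 hπ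
    obtain ⟨rfl, rfl, rfl, rfl⟩ :=
      (gwSupportConditions_iff hp hq ht hs).1 ((gw_extendedEquilibrium_iff hp hq ht hs).1 hE)
    exact ⟨GWσ_eq.symm, GWπ_eq.symm⟩
  · rintro ⟨rfl, rfl⟩
    obtain ⟨hp, hq, ht, hs⟩ := gw_values_mem_Icc
    rw [GWσ_eq, GWπ_eq]
    exact ⟨forall_isDist_fin_two_iff.2 ⟨_, hp, _, hq, rfl⟩,
      forall_isDist_fin_two_iff.2 ⟨_, ht, _, hs, rfl⟩,
      (gw_extendedEquilibrium_iff hp hq ht hs).2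
        ((gwSupportConditions_iff hp hq ht hs).2 ⟨rfl, rfl, rfl, rfl⟩)⟩
end
end
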